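/- For every n ≥ 1, the number of Dyck n-paths whose terminal descent has odd length equals the number of early-hill-free Dyck n-paths (paths with no UDU occurrence starting at ground level). -/

import Mathlib

inductive Step : Type
  | U : Step
  | D : Step
deriving DecidableEq

open Step

/-- The path stays weakly above ground level: every prefix has at least as many `U`s as `D`s. -/
def NonnegPrefixes (p : List Step) : Prop :=
  ∀ q : List Step, q <+: p → q.count D ≤ q.count U

/-- A Dyck path: equally many upsteps and downsteps, never dipping below ground level. -/
def IsDyck (p : List Step) : Prop :=
  p.count U = p.count D ∧ NonnegPrefixes p

/-- A Dyck `n`-path: a Dyck path with `n` upsteps (semilength `n`). -/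
def IsDyckN (n : ℕ) (p : List Step) : Prop :=
  IsDyck p ∧ p.count U = n

/-- Length of the terminal descent (maximal final run of downsteps). -/
def termDesc (p : List Step) : ℕ :=
  (p.reverse.takeWhile (fun s => s == D)).length

/-- Number of returns: downsteps that bring the path back to ground level. -/
def returnCount (p : List Step) : ℕ :=
  ((List.range p.length).filter
    (fun i => (p.take (i+1)).count U == (p.take (i+1)).count D)).length

/-- `GroundDescent p q m r` : `p = q ++ D^m ++ r` is a maximal run of `m ≥ 1` downsteps
ending at ground level. -/
def GroundDescent (p q : List Step) (m : ℕ) (r : List Step) : Prop :=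
  p = q ++ List.replicate m D ++ r ∧ 1 ≤ m ∧
  q.getLast? ≠ some D ∧ r.head? ≠ some D ∧
  q.count U = q.count D + m

/-- All descents to ground level other than the terminal one have odd length. -/
def OddNonterminalGroundDescents (p : List Step) : Prop :=
  ∀ q m r, GroundDescent p q m r → r ≠ [] → Odd m

/-- No occurrence of `UD` starting at ground level. -/
def HillFree (p : List Step) : Prop :=
  ∀ q r : List Step, p = q ++ [U, D] ++ r → q.count U ≠ q.count D

/-- No occurrence of `UDU` starting at ground level. -/
def EarlyHillFree (p : List Step) : Prop :=
  ∀ q r : List Step, p = q ++ [U, D, U] ++ r → q.count U ≠ q.count D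

/-- Number of early hills: occurrences of `UDU` starting at ground level. -/
def earlyHillCount (p : List Step) : ℕ :=
  ((List.range p.length).filter
    (fun i => decide ((p.take i).count U = (p.take i).count D ∧
      (p.drop i).take 3 = [U, D, U]))).length

/-!
Decompose a nonempty Dyck path at its first return, `p = U r D q`. If `q ≠ []`, the terminal
descent of `p` is that of `q`, and `p` is early-hill-free iff `r ≠ []` and `q` is early-hill-free.
If `q = []`, the terminal descent of `p` is one longer than that of `r`, and `p` is always
early-hill-free. Writing `c k` for the number of Dyck `k`-paths, both counts `f` therefore satisfy
`f (m + 1) = ∑_{1 ≤ k < m} c k * f (m - k) + c m` (for odd terminal descents, the summand `r = []`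
and the summand `q = []` together contribute `c m`), and this recursion determines `f` on
positive arguments.
-/

instance : Fintype Step :=
  ⟨{U, D}, fun s => by cases s <;> simp⟩

lemma count_U_add_count_D (p : List Step) : p.count U + p.count D = p.length := by
  induction p with
  | nil => rfl
  | cons s p ih => cases s <;> simp <;> omega

namespace IsDyck

lemma nil : IsDyck [] :=
  ⟨rfl, fun q hq => by simp [List.prefix_nil.mp hq]⟩

lemma exists_eq_U_cons {p : List Step} (hp : IsDyck p) (hne : p ≠ []) : ∃ t, p = U :: t := by
  obtain ⟨s, t, rfl⟩ := List.exists_cons_of_ne_nil hne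
  cases s with
  | U => exact ⟨t, rfl⟩
  | D => simpa using hp.2 [D] ⟨t, rfl⟩

lemma U_mem {p : List Step} (hp : IsDyck p) (hne : p ≠ []) : U ∈ p := by
  obtain ⟨t, rfl⟩ := hp.exists_eq_U_cons hne
  exact List.mem_cons_self

end IsDyck

lemma IsDyckN.length_eq {n : ℕ} {p : List Step} (hp : IsDyckN n p) : p.length = 2 * n := by
  have := count_U_add_count_D p
  have := hp.1.1
  have := hp.2
  omega

lemma IsDyckN.ne_nil {n : ℕ} {p : List Step} (hp : IsDyckN n p) (hn : n ≠ 0) : p ≠ [] := by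
  rintro rfl
  exact hn hp.2.symm

lemma isDyckN_zero_iff {p : List Step} : IsDyckN 0 p ↔ p = [] :=
  ⟨fun hp => List.eq_nil_of_length_eq_zero hp.length_eq, fun hp => hp ▸ ⟨IsDyck.nil, rfl⟩⟩

lemma exists_first_passage (t : List Step) (h : ℕ) (ht : t.count U + h < t.count D) :
    ∃ r q, t = r ++ D :: q ∧ r.count D = r.count U + h ∧
      ∀ s, s <+: r → s.count D ≤ s.count U + h := by
  induction t generalizing h with
  | nil => simp at ht
  | cons x t ih =>
    cases x with
    | U =>
      obtain ⟨r, q, rfl, hr, hpre⟩ := ih (h + 1) (by simp at ht; omega)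
      refine ⟨U :: r, q, rfl, by simp; omega, fun s hs => ?_⟩
      rcases List.prefix_cons_iff.mp hs with rfl | ⟨s, rfl, hs'⟩
      · simp
      · have := hpre s hs'
        simp
        omega
    | D =>
      cases h with
      | zero => exact ⟨[], t, rfl, rfl, fun s hs => by simp [List.prefix_nil.mp hs]⟩
      | succ h =>
        obtain ⟨r, q, rfl, hr, hpre⟩ := ih h (by simp at ht; omega)
        refine ⟨D :: r, q, rfl, by simp; omega, fun s hs => ?_⟩
        rcases List.prefix_cons_iff.mp hs with rfl | ⟨s, rfl, hs'⟩
        · simp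
        · have := hpre s hs'
          simp
          omega

namespace IsDyck

lemma exists_eq_firstReturn {p : List Step} (hp : IsDyck p) (hne : p ≠ []) :
    ∃ r q, IsDyck r ∧ IsDyck q ∧ p = U :: (r ++ D :: q) := by
  obtain ⟨t, rfl⟩ := hp.exists_eq_U_cons hne
  have hbal : t.count U + 1 = t.count D := by simpa using hp.1
  obtain ⟨r, q, rfl, hr, hpre⟩ := exists_first_passage t 0 (by omega)
  refine ⟨r, q, ⟨hr.symm, hpre⟩, ⟨?_, fun s hs => ?_⟩, rfl⟩
  · simp at hbal
    omega
  · have := hp.2 (U :: (r ++ D :: s)) (by simpa using hs)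
    simp at this
    omega

/-- Otherwise `r₁ ++ [D]`, which ends below ground level, would be a prefix of `r₂`. -/
lemma length_le_of_append_D_eq {r₁ q₁ r₂ q₂ : List Step} (hr₁ : r₁.count U = r₁.count D)
    (hr₂ : NonnegPrefixes r₂) (h : r₁ ++ D :: q₁ = r₂ ++ D :: q₂) : r₂.length ≤ r₁.length := by
  by_contra hlt
  have hext : r₁ ++ [D] <+: r₂ ++ D :: q₂ := h ▸ ⟨q₁, by simp⟩
  have hpre : r₁ ++ [D] <+: r₂ :=
    List.prefix_of_prefix_length_le hext (List.prefix_append r₂ _) (by simp; omega)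
  have := hr₂ _ hpre
  simp at this
  omega

lemma firstReturn_inj {r₁ q₁ r₂ q₂ : List Step} (hr₁ : IsDyck r₁) (hr₂ : IsDyck r₂)
    (h : r₁ ++ D :: q₁ = r₂ ++ D :: q₂) : r₁ = r₂ ∧ q₁ = q₂ := by
  have hlen := le_antisymm (length_le_of_append_D_eq hr₂.1 hr₁.2 h.symm)
    (length_le_of_append_D_eq hr₁.1 hr₂.2 h)
  obtain ⟨rfl, hq⟩ := List.append_inj h hlen
  exact ⟨rfl, List.cons_injective hq⟩

end IsDyck

lemma NonnegPrefixes.append {a b : List Step} (ha : NonnegPrefixes a)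
    (hbal : a.count U = a.count D) (hb : NonnegPrefixes b) : NonnegPrefixes (a ++ b) := by
  intro s hs
  rcases List.prefix_or_prefix_of_prefix hs (List.prefix_append a b) with hsa | ⟨t, rfl⟩
  · exact ha s hsa
  · have := hb t ((List.prefix_append_right_inj a).mp hs)
    simp only [List.count_append]
    omega

lemma IsDyck.firstReturn {r q : List Step} (hr : IsDyck r) (hq : IsDyck q) :
    IsDyck (U :: (r ++ D :: q)) := by
  have hhill : NonnegPrefixes (U :: (r ++ [D])) := by
    intro s hs
    rcases List.prefix_cons_iff.mp hs with rfl | ⟨t, rfl, ht⟩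
    · simp
    rcases List.prefix_concat_iff.mp ht with rfl | ht
    · have := hr.1
      simp
      omega
    · have := hr.2 t ht
      simp
      omega
  have hsplit : U :: (r ++ D :: q) = U :: (r ++ [D]) ++ q := by simp
  refine ⟨?_, hsplit ▸ hhill.append (by simp [hr.1]) hq.2⟩
  simp [hr.1, hq.1]
  omega

lemma IsDyck.eq_firstReturn_append_of_eq_append {r q a b : List Step} (hr : IsDyck r)
    (hbal : a.count U = a.count D) (hne : a ≠ []) (h : U :: (r ++ D :: q) = a ++ b) :
    ∃ a', a = U :: (r ++ D :: a') ∧ q = a' ++ b ∧ a'.count U = a'.count D := by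
  obtain ⟨x, a, rfl⟩ := List.exists_cons_of_ne_nil hne
  obtain ⟨rfl, h⟩ : U = x ∧ r ++ D :: q = a ++ b := by simpa using h
  obtain ⟨r', a', rfl, hr', hpre⟩ := exists_first_passage a 0 (by simp at hbal; omega)
  obtain ⟨rfl, rfl⟩ := hr.firstReturn_inj ⟨hr'.symm, hpre⟩ (by simpa using h)
  refine ⟨a', rfl, rfl, ?_⟩
  simp at hbal
  omega

lemma takeWhile_isD_append_of_U_mem {l : List Step} (l' : List Step) (h : U ∈ l) :
    (l ++ l').takeWhile (· == D) = l.takeWhile (· == D) := by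
  induction l with
  | nil => simp at h
  | cons x l ih =>
    cases x with
    | U => simp
    | D => simp [ih (by simpa using h)]

lemma termDesc_append_of_U_mem (l₁ : List Step) {l₂ : List Step} (h : U ∈ l₂) :
    termDesc (l₁ ++ l₂) = termDesc l₂ := by
  rw [termDesc, List.reverse_append, takeWhile_isD_append_of_U_mem _ (List.mem_reverse.mpr h)]
  rfl

lemma termDesc_append_D (l : List Step) : termDesc (l ++ [D]) = termDesc l + 1 := by
  simp [termDesc]

lemma IsDyck.termDesc_firstReturn {r q : List Step} (hq : IsDyck q) (hq0 : q ≠ []) :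
    termDesc (U :: (r ++ D :: q)) = termDesc q := by
  simpa using termDesc_append_of_U_mem (U :: (r ++ [D])) (hq.U_mem hq0)

lemma IsDyck.termDesc_firstReturn_nil {r : List Step} (hr : IsDyck r) :
    termDesc (U :: (r ++ [D])) = termDesc r + 1 := by
  rw [← List.cons_append, termDesc_append_D]
  rcases eq_or_ne r [] with rfl | hr0
  · rfl
  · simpa using termDesc_append_of_U_mem [U] (hr.U_mem hr0)

lemma IsDyck.earlyHillFree_firstReturn_iff {r q : List Step} (hr : IsDyck r) (hq : IsDyck q) :
    EarlyHillFree (U :: (r ++ D :: q)) ↔ q = [] ∨ r ≠ [] ∧ EarlyHillFree q := by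
  constructor
  · intro h
    refine or_iff_not_imp_left.mpr fun hq0 => ⟨?_, fun a b hab hbal => ?_⟩
    · rintro rfl
      obtain ⟨t, rfl⟩ := hq.exists_eq_U_cons hq0
      exact h [] t rfl rfl
    · refine h (U :: (r ++ D :: a)) b (by simp [hab]) ?_
      have := hr.1
      simp
      omega
  · intro hcase a b hab hbal
    rcases eq_or_ne a [] with rfl | ha0
    · have hstart : r ++ D :: q = D :: U :: b := by simpa using hab
      rcases eq_or_ne r [] with rfl | hr0
      · obtain rfl : q = U :: b := by simpa using hstart
        simp at hcase
      · obtain ⟨t, rfl⟩ := hr.exists_eq_U_cons hr0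
        simp at hstart
    · obtain ⟨a', -, rfl, hbal'⟩ :=
        hr.eq_firstReturn_append_of_eq_append hbal ha0 (by simpa using hab)
      rcases hcase with hq0 | ⟨-, hq'⟩
      · simp at hq0
      · exact hq' a' b (by simp) hbal'

abbrev DyckPath (n : ℕ) : Type := {p : List Step // IsDyckN n p}

instance (n : ℕ) : Finite (DyckPath n) :=
  ((List.finite_length_eq Step (2 * n)).subset fun _ hp => IsDyckN.length_eq hp).to_subtype

noncomputable def dyckCount (n : ℕ) (P : List Step → Prop) : ℕ :=
  Nat.card {p : List Step // IsDyckN n p ∧ P p}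

lemma dyckCount_eq_card_subtype (n : ℕ) (P : List Step → Prop) :
    dyckCount n P = Nat.card {p : DyckPath n // P p} :=
  Nat.card_congr (Equiv.subtypeSubtypeEquivSubtypeInter _ _).symm

lemma dyckCount_congr {n : ℕ} {P Q : List Step → Prop} (h : ∀ p, IsDyckN n p → (P p ↔ Q p)) :
    dyckCount n P = dyckCount n Q :=
  Nat.card_congr (Equiv.subtypeEquivRight fun p => and_congr_right (h p))

lemma dyckCount_true_eq_add_not (n : ℕ) (P : List Step → Prop) :
    dyckCount n (fun _ => True) = dyckCount n P + dyckCount n (fun p => ¬ P p) := by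
  rw [dyckCount_eq_card_subtype, dyckCount_eq_card_subtype, dyckCount_eq_card_subtype,
    ← Nat.card_sum]
  classical
  exact Nat.card_congr ((Equiv.subtypeUnivEquiv fun _ => trivial).trans (Equiv.sumCompl _).symm)

lemma dyckCount_zero_of_pos {P : List Step → Prop} (h : P []) : dyckCount 0 P = 1 :=
  Nat.card_eq_one_iff_exists.mpr ⟨⟨[], ⟨IsDyck.nil, rfl⟩, h⟩,
    fun p => Subtype.ext (isDyckN_zero_iff.mp p.2.1)⟩

lemma dyckCount_zero_of_neg {P : List Step → Prop} (h : ¬ P []) : dyckCount 0 P = 0 :=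
  Nat.card_eq_zero.mpr <| Or.inl ⟨fun p => h (isDyckN_zero_iff.mp p.2.1 ▸ p.2.2)⟩

lemma IsDyckN.firstReturn {m : ℕ} (k : Fin (m + 1)) {r q : List Step} (hr : IsDyckN k r)
    (hq : IsDyckN (m - k) q) : IsDyckN (m + 1) (U :: (r ++ D :: q)) := by
  refine ⟨hr.1.firstReturn hq.1, ?_⟩
  have := k.isLt
  simp [hr.2, hq.2]
  omega

noncomputable def firstReturnEquiv (m : ℕ) :
    (Σ k : Fin (m + 1), DyckPath k × DyckPath (m - k)) ≃ DyckPath (m + 1) :=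
  Equiv.ofBijective
    (fun x => ⟨U :: (x.2.1.1 ++ D :: x.2.2.1), x.2.1.2.firstReturn x.1 x.2.2.2⟩) <| by
    constructor
    · rintro ⟨k₁, ⟨r₁, hr₁⟩, ⟨q₁, hq₁⟩⟩ ⟨k₂, ⟨r₂, hr₂⟩, ⟨q₂, hq₂⟩⟩ h
      obtain ⟨rfl, rfl⟩ := hr₁.1.firstReturn_inj hr₂.1 (by simpa using h)
      obtain rfl : k₁ = k₂ := Fin.ext (hr₁.2.symm.trans hr₂.2)
      rfl
    · rintro ⟨p, hp⟩
      obtain ⟨r, q, hr, hq, rfl⟩ := hp.1.exists_eq_firstReturn (hp.ne_nil (by omega))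
      have hcount := hp.2
      simp at hcount
      exact ⟨⟨⟨r.count U, by omega⟩, ⟨r, hr, rfl⟩, ⟨q, hq, by simp; omega⟩⟩, rfl⟩

lemma dyckCount_succ (m : ℕ) (P : List Step → Prop) :
    dyckCount (m + 1) P = ∑ k ∈ Finset.range (m + 1),
      Nat.card {x : DyckPath k × DyckPath (m - k) // P (U :: (x.1.1 ++ D :: x.2.1))} := by
  rw [dyckCount_eq_card_subtype, ← Fin.sum_univ_eq_sum_range, ← Nat.card_sigma]
  exact Nat.card_congr ((firstReturnEquiv m).subtypeEquivOfSubtype.symm.trans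
    { toFun := fun y => ⟨y.1.1, y.1.2, y.2⟩
      invFun := fun z => ⟨⟨z.1, z.2.1⟩, z.2.2⟩
      left_inv := fun _ => rfl
      right_inv := fun _ => rfl })

lemma card_firstReturn_of_iff {k l : ℕ} {P A B : List Step → Prop}
    (h : ∀ r q, IsDyckN k r → IsDyckN l q → (P (U :: (r ++ D :: q)) ↔ A r ∧ B q)) :
    Nat.card {x : DyckPath k × DyckPath l // P (U :: (x.1.1 ++ D :: x.2.1))} =
      dyckCount k A * dyckCount l B := by
  rw [dyckCount, dyckCount, ← Nat.card_prod]
  exact Nat.card_congr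
    { toFun := fun x => (⟨x.1.1, x.1.1.2, ((h _ _ x.1.1.2 x.1.2.2).mp x.2).1⟩,
        ⟨x.1.2, x.1.2.2, ((h _ _ x.1.1.2 x.1.2.2).mp x.2).2⟩)
      invFun := fun y => ⟨(⟨y.1, y.1.2.1⟩, ⟨y.2, y.2.2.1⟩),
        (h _ _ y.1.2.1 y.2.2.1).mpr ⟨y.1.2.2, y.2.2.2⟩⟩
      left_inv := fun _ => rfl
      right_inv := fun _ => rfl }

lemma dyckCount_oddTermDesc_succ (m : ℕ) :
    dyckCount (m + 1) (fun p => Odd (termDesc p)) =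
      ∑ k ∈ Finset.Ico 1 m,
          dyckCount k (fun _ => True) * dyckCount (m - k) (fun p => Odd (termDesc p))
        + dyckCount m (fun _ => True) := by
  have hfront : ∀ k ∈ Finset.range m,
      Nat.card {x : DyckPath k × DyckPath (m - k) // Odd (termDesc (U :: (x.1.1 ++ D :: x.2.1)))}
        = dyckCount k (fun _ => True) * dyckCount (m - k) (fun p => Odd (termDesc p)) := by
    intro k hk
    refine card_firstReturn_of_iff (P := fun p => Odd (termDesc p)) fun r q _ hq => ?_
    rw [hq.1.termDesc_firstReturn (hq.ne_nil (by simp at hk; omega)), true_and]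
  have hlast : Nat.card {x : DyckPath m × DyckPath (m - m) //
      Odd (termDesc (U :: (x.1.1 ++ D :: x.2.1)))} = dyckCount m (fun p => ¬ Odd (termDesc p)) := by
    rw [card_firstReturn_of_iff (P := fun p => Odd (termDesc p)) (B := fun _ => True),
      Nat.sub_self, dyckCount_zero_of_pos trivial, mul_one]
    intro r q hr hq
    obtain rfl := isDyckN_zero_iff.mp (Nat.sub_self m ▸ hq)
    rw [hr.1.termDesc_firstReturn_nil, Nat.odd_add_one, and_true]
  rw [dyckCount_succ, Finset.sum_range_succ, Finset.sum_congr rfl hfront, hlast]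
  rcases Nat.eq_zero_or_pos m with rfl | hm
  · rw [dyckCount_zero_of_pos (by simp [termDesc]), dyckCount_zero_of_pos trivial]
    simp
  · rw [Finset.range_eq_Ico, Finset.sum_eq_sum_Ico_succ_bot hm, dyckCount_zero_of_pos trivial,
      dyckCount_true_eq_add_not m (fun p => Odd (termDesc p)), Nat.sub_zero]
    ring

lemma dyckCount_earlyHillFree_succ (m : ℕ) :
    dyckCount (m + 1) EarlyHillFree =
      ∑ k ∈ Finset.Ico 1 m, dyckCount k (fun _ => True) * dyckCount (m - k) EarlyHillFree
        + dyckCount m (fun _ => True) := by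
  have hfront : ∀ k ∈ Finset.range m,
      Nat.card {x : DyckPath k × DyckPath (m - k) // EarlyHillFree (U :: (x.1.1 ++ D :: x.2.1))}
        = dyckCount k (fun r => r ≠ []) * dyckCount (m - k) EarlyHillFree := by
    intro k hk
    refine card_firstReturn_of_iff (P := EarlyHillFree) fun r q hr hq => ?_
    rw [hr.1.earlyHillFree_firstReturn_iff hq.1,
      or_iff_right (hq.ne_nil (by simp at hk; omega))]
  have hlast : Nat.card {x : DyckPath m × DyckPath (m - m) //
      EarlyHillFree (U :: (x.1.1 ++ D :: x.2.1))} = dyckCount m (fun _ => True) := by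
    rw [card_firstReturn_of_iff (P := EarlyHillFree) (B := fun _ => True), Nat.sub_self,
      dyckCount_zero_of_pos trivial, mul_one]
    intro r q hr hq
    obtain rfl := isDyckN_zero_iff.mp (Nat.sub_self m ▸ hq)
    simp [hr.1.earlyHillFree_firstReturn_iff IsDyck.nil]
  rw [dyckCount_succ, Finset.sum_range_succ, Finset.sum_congr rfl hfront, hlast]
  rcases Nat.eq_zero_or_pos m with rfl | hm
  · simp
  · rw [Finset.range_eq_Ico, Finset.sum_eq_sum_Ico_succ_bot hm,
      dyckCount_zero_of_neg (not_not_intro rfl), zero_mul, zero_add]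
    refine congrArg (· + _) (Finset.sum_congr rfl fun k hk => ?_)
    rw [dyckCount_congr fun r hr => iff_true_intro (hr.ne_nil (by simp at hk; omega))]

lemma apply_succ_eq_of_sum_recursion {f g c : ℕ → ℕ}
    (hf : ∀ m, f (m + 1) = ∑ k ∈ Finset.Ico 1 m, c k * f (m - k) + c m)
    (hg : ∀ m, g (m + 1) = ∑ k ∈ Finset.Ico 1 m, c k * g (m - k) + c m) (m : ℕ) :
    f (m + 1) = g (m + 1) := by
  induction m using Nat.strong_induction_on with
  | _ m ih =>
    rw [hf, hg]
    refine congrArg (· + c m) (Finset.sum_congr rfl fun k hk => ?_)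
    obtain ⟨hk1, hkm⟩ := Finset.mem_Ico.mp hk
    obtain ⟨j, hj⟩ : ∃ j, m - k = j + 1 := ⟨m - k - 1, by omega⟩
    rw [hj, ih j (by omega)]

/-- For every `n ≥ 1`, Dyck `n`-paths with odd-length terminal descent are equinumerous
with early-hill-free Dyck `n`-paths. -/
theorem stmt3 (n : ℕ) (hn : 1 ≤ n) :
    Nat.card {p : List Step // IsDyckN n p ∧ Odd (termDesc p)} =
    Nat.card {p : List Step // IsDyckN n p ∧ EarlyHillFree p} := by
  obtain ⟨m, rfl⟩ : ∃ m, n = m + 1 := ⟨n - 1, by omega⟩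
  exact apply_succ_eq_of_sum_recursion (f := fun n => dyckCount n fun p => Odd (termDesc p))
    (g := fun n => dyckCount n EarlyHillFree) dyckCount_oddTermDesc_succ
    dyckCount_earlyHillFree_succ m
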